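/- The group W₂₃₇ generated by the reflections in the ten roots r₁,…,r₁₀ acts transitively on the set of null vectors of Λ (future-directed primitive vectors of norm 0). -/

import Mathlib

/-!
Let `w` be the Weyl vector, with `w·rᵢ = 1` for every simple root. Reflecting a null vector `v`
in a simple root `r` with `v·r < 0` lowers the height `v·w` by the positive integer `-(v·r)`, and
the height stays nonnegative because `v` and `w` both lie in the closed future cone. So some
element of `W₂₃₇` moves `v` into the fundamental chamber `{v·rᵢ ≥ 0}`. There, expanding
`v = ∑ (v·rᵢ) ωᵢ` in the fundamental weights, which all lie in the closed future cone with
`ω₁ = ρ` the only null one, `v² = 0` forces `v` to be a multiple of `ρ`, and primitivity gives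
`v = ρ`.
-/

noncomputable section

/- Entry-evaluation lemmas for 10-component vectors. -/
section VecEval
variable {α : Type*}
@[simp] lemma vec10_0 (a0 a1 a2 a3 a4 a5 a6 a7 a8 a9 : α) : (![a0,a1,a2,a3,a4,a5,a6,a7,a8,a9] : Fin 10 → α) 0 = a0 := rfl
@[simp] lemma vec10_1 (a0 a1 a2 a3 a4 a5 a6 a7 a8 a9 : α) : (![a0,a1,a2,a3,a4,a5,a6,a7,a8,a9] : Fin 10 → α) 1 = a1 := rfl
@[simp] lemma vec10_2 (a0 a1 a2 a3 a4 a5 a6 a7 a8 a9 : α) : (![a0,a1,a2,a3,a4,a5,a6,a7,a8,a9] : Fin 10 → α) 2 = a2 := rfl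
@[simp] lemma vec10_3 (a0 a1 a2 a3 a4 a5 a6 a7 a8 a9 : α) : (![a0,a1,a2,a3,a4,a5,a6,a7,a8,a9] : Fin 10 → α) 3 = a3 := rfl
@[simp] lemma vec10_4 (a0 a1 a2 a3 a4 a5 a6 a7 a8 a9 : α) : (![a0,a1,a2,a3,a4,a5,a6,a7,a8,a9] : Fin 10 → α) 4 = a4 := rfl
@[simp] lemma vec10_5 (a0 a1 a2 a3 a4 a5 a6 a7 a8 a9 : α) : (![a0,a1,a2,a3,a4,a5,a6,a7,a8,a9] : Fin 10 → α) 5 = a5 := rfl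
@[simp] lemma vec10_6 (a0 a1 a2 a3 a4 a5 a6 a7 a8 a9 : α) : (![a0,a1,a2,a3,a4,a5,a6,a7,a8,a9] : Fin 10 → α) 6 = a6 := rfl
@[simp] lemma vec10_7 (a0 a1 a2 a3 a4 a5 a6 a7 a8 a9 : α) : (![a0,a1,a2,a3,a4,a5,a6,a7,a8,a9] : Fin 10 → α) 7 = a7 := rfl
@[simp] lemma vec10_8 (a0 a1 a2 a3 a4 a5 a6 a7 a8 a9 : α) : (![a0,a1,a2,a3,a4,a5,a6,a7,a8,a9] : Fin 10 → α) 8 = a8 := rfl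
@[simp] lemma vec10_9 (a0 a1 a2 a3 a4 a5 a6 a7 a8 a9 : α) : (![a0,a1,a2,a3,a4,a5,a6,a7,a8,a9] : Fin 10 → α) 9 = a9 := rfl
end VecEval

/-- The underlying rational vector space `ℚ¹⁰`; coordinates `0,…,7` are the `E₈`-part
`x₁,…,x₈`, coordinate `8` is `y` and coordinate `9` is `z`. -/
abbrev Vec : Type := Fin 10 → ℚ

/-- The bilinear form associated to the quadratic form
`(x₁,…,x₈;y,z)² = −x₁²−⋯−x₈²+2yz`. -/
def bil (x y : Vec) : ℚ :=
  x 8 * y 9 + x 9 * y 8 -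
    (x 0 * y 0 + x 1 * y 1 + x 2 * y 2 + x 3 * y 3 +
     x 4 * y 4 + x 5 * y 5 + x 6 * y 6 + x 7 * y 7)

lemma bil_add_left (x y z : Vec) : bil (x + y) z = bil x z + bil y z := by
  simp only [bil, Pi.add_apply]; ring

lemma bil_smul_left (c : ℚ) (x z : Vec) : bil (c • x) z = c * bil x z := by
  simp only [bil, Pi.smul_apply, smul_eq_mul]; ring

lemma bil_comm (x y : Vec) : bil x y = bil y x := by
  simp only [bil]; ring

lemma bil_add_right (x y z : Vec) : bil x (y + z) = bil x y + bil x z := by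
  simp only [bil, Pi.add_apply]; ring

lemma bil_smul_right (c : ℚ) (x z : Vec) : bil x (c • z) = c * bil x z := by
  simp only [bil, Pi.smul_apply, smul_eq_mul]; ring

/-- Reflection in a vector `r` of norm `−2`, as a linear map:  `x ↦ x + (x·r)r`. -/
def reflMap (r : Vec) : Vec →ₗ[ℚ] Vec where
  toFun x := x + bil x r • r
  map_add' x y := by
    show (x + y) + bil (x + y) r • r = (x + bil x r • r) + (y + bil y r • r)
    rw [bil_add_left, add_smul]; abel
  map_smul' c x := by
    show (c • x) + bil (c • x) r • r = (RingHom.id ℚ) c • (x + bil x r • r)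
    rw [bil_smul_left]; simp [smul_add, smul_smul]

lemma reflMap_invol (r : Vec) (hr : bil r r = -2) : Function.Involutive (reflMap r) := by
  intro x
  show (x + bil x r • r) + bil (x + bil x r • r) r • r = x
  rw [bil_add_left, bil_smul_left, hr]
  have h : bil x r + bil x r * (-2) = -(bil x r) := by ring
  rw [h, neg_smul]
  abel

/-- Reflection in a root `r` (a vector of norm `−2`), as a linear automorphism of `ℚ¹⁰`:
`x ↦ x + (x·r)r`. -/
def reflG (r : Vec) (hr : bil r r = -2) : Vec ≃ₗ[ℚ] Vec :=
  { reflMap r with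
    invFun := reflMap r
    left_inv := reflMap_invol r hr
    right_inv := reflMap_invol r hr }

/-- integrality of the first eight coordinates -/
def lowInt (x : Vec) : Prop := ∀ i : Fin 10, i.val < 8 → ∃ n : ℤ, x i = n

/-- the first eight coordinates all lie in `ℤ + ½` -/
def lowHalf (x : Vec) : Prop := ∀ i : Fin 10, i.val < 8 → ∃ n : ℤ, x i = n + 1/2

/-- the sum `x₁ + ⋯ + x₈` of the first eight coordinates -/
def sum8 (x : Vec) : ℚ := x 0 + x 1 + x 2 + x 3 + x 4 + x 5 + x 6 + x 7

/-- Membership in the Enriques lattice `Λ` (the "odd" coordinate system):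
`y, z ∈ ℤ`, and `x₁,…,x₈` are either all integers with even sum,
or all in `ℤ + ½` with odd sum. -/
def mem (x : Vec) : Prop :=
  (∃ n : ℤ, x 8 = n) ∧ (∃ n : ℤ, x 9 = n) ∧
    ((lowInt x ∧ ∃ k : ℤ, sum8 x = 2 * k) ∨
     (lowHalf x ∧ ∃ k : ℤ, sum8 x = 2 * k + 1))

/-- `g` is an isometry of the lattice `Λ`: a linear automorphism of the ambient
space which maps `Λ` bijectively onto itself and preserves the bilinear form.
(The group `O(Λ)` is the group of all such `g`.) -/
def IsIsometry (g : Vec ≃ₗ[ℚ] Vec) : Prop :=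
  (∀ x : Vec, mem x ↔ mem (g x)) ∧ ∀ x y : Vec, bil (g x) (g y) = bil x y

/-- the vector `(0,…,0;1,1)`, a positive-norm vector singling out the future cone -/
def eU : Vec := ![0,0,0,0,0,0,0,0,1,1]

/-- `v` lies in the future cone: it has positive norm and lies in the same
component of `{v : v·v > 0}` as `(0,…,0;1,1)`. -/
def InFuture (v : Vec) : Prop := 0 < bil v v ∧ 0 < bil v eU

/-- `g` preserves the future cone; `O↑(Λ)` is the set of isometries with this property. -/
def PreservesFuture (g : Vec ≃ₗ[ℚ] Vec) : Prop := ∀ v : Vec, InFuture v → InFuture (g v)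

/-- A null vector: a primitive lattice vector of norm `0` which is
future-directed, i.e. pairs positively with `(0,…,0;1,1)`. -/
def IsNull (v : Vec) : Prop :=
  mem v ∧ bil v v = 0 ∧ 0 < bil v eU ∧
    ∀ (k : ℤ) (w : Vec), mem w → v = (k : ℚ) • w → k = 1 ∨ k = -1

/-- the null vector `ρ = (0,…,0;1,0)` -/
def ρ : Vec := ![0,0,0,0,0,0,0,0,1,0]

def r1 : Vec := ![0,0,0,0,0,0,0,0,-1,1]
def r2 : Vec := ![-1/2,-1/2,-1/2,-1/2,-1/2,-1/2,-1/2,1/2,1,0]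
def r3 : Vec := ![0,0,0,0,0,0,1,-1,0,0]
def r4 : Vec := ![0,0,0,0,0,1,-1,0,0,0]
def r5 : Vec := ![0,0,0,0,1,-1,0,0,0,0]
def r6 : Vec := ![0,0,0,1,-1,0,0,0,0,0]
def r7 : Vec := ![0,0,1,-1,0,0,0,0,0,0]
def r8 : Vec := ![0,1,-1,0,0,0,0,0,0,0]
def r9 : Vec := ![1,-1,0,0,0,0,0,0,0,0]
def r10 : Vec := ![-1/2,-1/2,-1/2,1/2,1/2,1/2,1/2,1/2,0,0]

lemma r1_norm : bil r1 r1 = -2 := by norm_num [bil, r1]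
lemma r2_norm : bil r2 r2 = -2 := by norm_num [bil, r2]
lemma r3_norm : bil r3 r3 = -2 := by norm_num [bil, r3]
lemma r4_norm : bil r4 r4 = -2 := by norm_num [bil, r4]
lemma r5_norm : bil r5 r5 = -2 := by norm_num [bil, r5]
lemma r6_norm : bil r6 r6 = -2 := by norm_num [bil, r6]
lemma r7_norm : bil r7 r7 = -2 := by norm_num [bil, r7]
lemma r8_norm : bil r8 r8 = -2 := by norm_num [bil, r8]
lemma r9_norm : bil r9 r9 = -2 := by norm_num [bil, r9]
lemma r10_norm : bil r10 r10 = -2 := by norm_num [bil, r10]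

def r11 : Vec := ![-1/2,-1/2,-1/2,-1/2,-1/2,-1/2,-1/2,1/2,0,2]

lemma r11_norm : bil r11 r11 = -2 := by norm_num [bil, r11]


lemma exists_mem_smul_eq_of_descent {G X R : Type*} [Group G] [MulAction G X]
    [Ring R] [LinearOrder R] [IsStrictOrderedRing R] [Archimedean R]
    (H : Subgroup G) (S : Set X) (x₀ : X) (height : X → R)
    (hnonneg : ∀ x ∈ S, 0 ≤ height x)
    (hstep : ∀ x ∈ S, x ≠ x₀ → ∃ g ∈ H, g • x ∈ S ∧ height (g • x) ≤ height x - 1) :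
    ∀ x ∈ S, ∃ g ∈ H, g • x = x₀ := by
  suffices key : ∀ n : ℕ, ∀ x ∈ S, height x < n → ∃ g ∈ H, g • x = x₀ by
    intro x hx
    obtain ⟨n, hn⟩ := exists_nat_gt (height x)
    exact key n x hx hn
  intro n
  induction n with
  | zero => exact fun x hx hlt => absurd (hnonneg x hx) (by simpa using hlt)
  | succ n ih =>
    intro x hx hlt
    by_cases hx₀ : x = x₀
    · exact ⟨1, H.one_mem, by rw [one_smul, hx₀]⟩
    obtain ⟨g, hg, hgS, hgh⟩ := hstep x hx hx₀
    have hlt' : height (g • x) < n :=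
      hgh.trans_lt (sub_lt_iff_lt_add.2 (by exact_mod_cast hlt))
    obtain ⟨g', hg', hg'x⟩ := ih (g • x) hgS hlt'
    exact ⟨g' * g, H.mul_mem hg' hg, by rw [mul_smul, hg'x]⟩

section Lattice

/-- For `ε` even this is the integral case of `mem`, for `ε` odd the half-integral one. -/
def HasE8Parity (x : Vec) (ε : ℤ) : Prop :=
  (∀ i : Fin 10, i.val < 8 → ∃ n : ℤ, x i = n + ε / 2) ∧ ∃ k : ℤ, sum8 x = 2 * k + ε

lemma mem_iff_exists_hasE8Parity (x : Vec) :
    mem x ↔ (∃ n : ℤ, x 8 = n) ∧ (∃ n : ℤ, x 9 = n) ∧ ∃ ε : ℤ, HasE8Parity x ε := by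
  constructor
  · rintro ⟨h8, h9, ⟨hint, k, hk⟩ | ⟨hhalf, k, hk⟩⟩
    · exact ⟨h8, h9, 0, fun i hi => by simpa using hint i hi, k, by simpa using hk⟩
    · exact ⟨h8, h9, 1, fun i hi => by simpa using hhalf i hi, k, by simpa using hk⟩
  · rintro ⟨h8, h9, ε, hcoord, k, hk⟩
    obtain ⟨t, rfl | rfl⟩ := Int.even_or_odd' ε
    · refine ⟨h8, h9, Or.inl ⟨fun i hi => ?_, k + t, by rw [hk]; push_cast; ring⟩⟩
      obtain ⟨n, hn⟩ := hcoord i hi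
      exact ⟨n + t, by rw [hn]; push_cast; ring⟩
    · refine ⟨h8, h9, Or.inr ⟨fun i hi => ?_, k + t, by rw [hk]; push_cast; ring⟩⟩
      obtain ⟨n, hn⟩ := hcoord i hi
      exact ⟨n + t, by rw [hn]; push_cast; ring⟩

lemma HasE8Parity.add_zsmul {x y : Vec} {ε δ : ℤ} (hx : HasE8Parity x ε)
    (hy : HasE8Parity y δ) (n : ℤ) : HasE8Parity (x + (n : ℚ) • y) (ε + n * δ) := by
  obtain ⟨hxc, k, hk⟩ := hx
  obtain ⟨hyc, l, hl⟩ := hy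
  refine ⟨fun i hi => ?_, k + n * l, ?_⟩
  · obtain ⟨a, ha⟩ := hxc i hi
    obtain ⟨b, hb⟩ := hyc i hi
    refine ⟨a + n * b, ?_⟩
    simp only [Pi.add_apply, Pi.smul_apply, smul_eq_mul, ha, hb]
    push_cast
    ring
  · simp only [sum8, Pi.add_apply, Pi.smul_apply, smul_eq_mul] at hk hl ⊢
    push_cast
    linear_combination hk + (n : ℚ) * hl

lemma mem_add_zsmul {x y : Vec} (hx : mem x) (hy : mem y) (n : ℤ) :
    mem (x + (n : ℚ) • y) := by
  rw [mem_iff_exists_hasE8Parity] at hx hy ⊢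
  obtain ⟨⟨x8, hx8⟩, ⟨x9, hx9⟩, ε, hx⟩ := hx
  obtain ⟨⟨y8, hy8⟩, ⟨y9, hy9⟩, δ, hy⟩ := hy
  refine ⟨⟨x8 + n * y8, ?_⟩, ⟨x9 + n * y9, ?_⟩, _, hx.add_zsmul hy n⟩ <;>
    simp [hx8, hx9, hy8, hy9]

lemma HasE8Parity.exists_dot_eq_int {x y : Vec} {ε δ : ℤ} (hx : HasE8Parity x ε)
    (hy : HasE8Parity y δ) : ∃ n : ℤ,
      x 0 * y 0 + x 1 * y 1 + x 2 * y 2 + x 3 * y 3 + x 4 * y 4 + x 5 * y 5 + x 6 * y 6 +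
        x 7 * y 7 = n := by
  obtain ⟨hxc, k, hk⟩ := hx
  obtain ⟨hyc, l, hl⟩ := hy
  obtain ⟨a0, ha0⟩ := hxc 0 (by decide)
  obtain ⟨a1, ha1⟩ := hxc 1 (by decide)
  obtain ⟨a2, ha2⟩ := hxc 2 (by decide)
  obtain ⟨a3, ha3⟩ := hxc 3 (by decide)
  obtain ⟨a4, ha4⟩ := hxc 4 (by decide)
  obtain ⟨a5, ha5⟩ := hxc 5 (by decide)
  obtain ⟨a6, ha6⟩ := hxc 6 (by decide)
  obtain ⟨a7, ha7⟩ := hxc 7 (by decide)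
  obtain ⟨b0, hb0⟩ := hyc 0 (by decide)
  obtain ⟨b1, hb1⟩ := hyc 1 (by decide)
  obtain ⟨b2, hb2⟩ := hyc 2 (by decide)
  obtain ⟨b3, hb3⟩ := hyc 3 (by decide)
  obtain ⟨b4, hb4⟩ := hyc 4 (by decide)
  obtain ⟨b5, hb5⟩ := hyc 5 (by decide)
  obtain ⟨b6, hb6⟩ := hyc 6 (by decide)
  obtain ⟨b7, hb7⟩ := hyc 7 (by decide)
  simp only [sum8, ha0, ha1, ha2, ha3, ha4, ha5, ha6, ha7, hb0, hb1, hb2, hb3, hb4, hb5, hb6,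
    hb7] at hk hl ⊢
  -- `∑ (aᵢ + ε/2)(bᵢ + δ/2) = ∑ aᵢbᵢ + (δ ∑ xᵢ + ε ∑ yᵢ)/2 - 2εδ`,
  -- with `∑ xᵢ = 2k + ε` and `∑ yᵢ = 2l + δ`
  refine ⟨a0 * b0 + a1 * b1 + a2 * b2 + a3 * b3 + a4 * b4 + a5 * b5 + a6 * b6 + a7 * b7 +
    δ * k + ε * l - ε * δ, ?_⟩
  push_cast
  linear_combination (δ / 2 : ℚ) * hk + (ε / 2 : ℚ) * hl

lemma bil_int {x y : Vec} (hx : mem x) (hy : mem y) : ∃ n : ℤ, bil x y = n := by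
  rw [mem_iff_exists_hasE8Parity] at hx hy
  obtain ⟨⟨x8, hx8⟩, ⟨x9, hx9⟩, ε, hx⟩ := hx
  obtain ⟨⟨y8, hy8⟩, ⟨y9, hy9⟩, δ, hy⟩ := hy
  obtain ⟨m, hm⟩ := hx.exists_dot_eq_int hy
  refine ⟨x8 * y9 + x9 * y8 - m, ?_⟩
  rw [bil, hm, hx8, hx9, hy8, hy9]
  push_cast
  ring

lemma mem_of_eq_floor (x : Vec) (ε k : ℤ)
    (hcoord : ∀ i : Fin 10, x i = ⌊x i⌋ + if i.val < 8 then (ε / 2 : ℚ) else 0)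
    (hsum : sum8 x = 2 * k + ε) : mem x :=
  (mem_iff_exists_hasE8Parity x).2
    ⟨⟨_, by simpa using hcoord 8⟩, ⟨_, by simpa using hcoord 9⟩, ε,
      fun i hi => ⟨_, by simpa [hi] using hcoord i⟩, k, hsum⟩

end Lattice

section SimpleRoots

def simpleRoot : Fin 10 → Vec := ![r1, r2, r3, r4, r5, r6, r7, r8, r9, r10]

lemma bil_simpleRoot_self (i : Fin 10) : bil (simpleRoot i) (simpleRoot i) = -2 := by
  fin_cases i
  exacts [r1_norm, r2_norm, r3_norm, r4_norm, r5_norm, r6_norm, r7_norm, r8_norm, r9_norm,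
    r10_norm]

lemma mem_simpleRoot (i : Fin 10) : mem (simpleRoot i) := by
  fin_cases i <;>
    simp only [simpleRoot, Fin.zero_eta, Fin.mk_one, Fin.reduceFinMk, Matrix.cons_val]
  · exact mem_of_eq_floor r1 0 0 (by intro i; fin_cases i <;> norm_num [r1])
      (by norm_num [sum8, r1])
  · exact mem_of_eq_floor r2 1 (-2) (by intro i; fin_cases i <;> norm_num [r2])
      (by norm_num [sum8, r2])
  · exact mem_of_eq_floor r3 0 0 (by intro i; fin_cases i <;> norm_num [r3])
      (by norm_num [sum8, r3])
  · exact mem_of_eq_floor r4 0 0 (by intro i; fin_cases i <;> norm_num [r4])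
      (by norm_num [sum8, r4])
  · exact mem_of_eq_floor r5 0 0 (by intro i; fin_cases i <;> norm_num [r5])
      (by norm_num [sum8, r5])
  · exact mem_of_eq_floor r6 0 0 (by intro i; fin_cases i <;> norm_num [r6])
      (by norm_num [sum8, r6])
  · exact mem_of_eq_floor r7 0 0 (by intro i; fin_cases i <;> norm_num [r7])
      (by norm_num [sum8, r7])
  · exact mem_of_eq_floor r8 0 0 (by intro i; fin_cases i <;> norm_num [r8])
      (by norm_num [sum8, r8])
  · exact mem_of_eq_floor r9 0 0 (by intro i; fin_cases i <;> norm_num [r9])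
      (by norm_num [sum8, r9])
  · exact mem_of_eq_floor r10 1 0 (by intro i; fin_cases i <;> norm_num [r10])
      (by norm_num [sum8, r10])

lemma mem_ρ : mem ρ :=
  mem_of_eq_floor ρ 0 0 (by intro i; fin_cases i <;> norm_num [ρ]) (by norm_num [sum8, ρ])

def W237 : Subgroup (Vec ≃ₗ[ℚ] Vec) :=
  Subgroup.closure
    {reflG r1 r1_norm, reflG r2 r2_norm, reflG r3 r3_norm, reflG r4 r4_norm,
     reflG r5 r5_norm, reflG r6 r6_norm, reflG r7 r7_norm, reflG r8 r8_norm,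
     reflG r9 r9_norm, reflG r10 r10_norm}

lemma reflG_simpleRoot_mem_W237 (i : Fin 10) :
    reflG (simpleRoot i) (bil_simpleRoot_self i) ∈ W237 := by
  apply Subgroup.subset_closure
  fin_cases i <;> simp only [Set.mem_insert_iff, Set.mem_singleton_iff] <;> tauto

end SimpleRoots

section Cone

def InClosedFuture (u : Vec) : Prop := 0 ≤ bil u u ∧ 0 ≤ u 8 ∧ 0 ≤ u 9

lemma bil_eU (u : Vec) : bil u eU = u 8 + u 9 := by
  simp [bil, eU]

lemma bil_self_eq (u : Vec) : bil u u = 2 * (u 8 * u 9) -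
    (u 0 ^ 2 + u 1 ^ 2 + u 2 ^ 2 + u 3 ^ 2 + u 4 ^ 2 + u 5 ^ 2 + u 6 ^ 2 + u 7 ^ 2) := by
  simp only [bil]; ring

lemma inClosedFuture_of_bil_self_nonneg {u : Vec} (hu : 0 ≤ bil u u) (h : 0 ≤ u 8 + u 9) :
    InClosedFuture u := by
  have hprod : 0 ≤ u 8 * u 9 := by
    rw [bil_self_eq] at hu
    nlinarith [sq_nonneg (u 0), sq_nonneg (u 1), sq_nonneg (u 2), sq_nonneg (u 3),
      sq_nonneg (u 4), sq_nonneg (u 5), sq_nonneg (u 6), sq_nonneg (u 7)]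
  refine ⟨hu, ?_, ?_⟩ <;> nlinarith

lemma InClosedFuture.bil_nonneg {u v : Vec} (hu : InClosedFuture u) (hv : InClosedFuture v) :
    0 ≤ bil u v := by
  obtain ⟨hu, hu8, hu9⟩ := hu
  obtain ⟨hv, hv8, hv9⟩ := hv
  set P := u 0 * v 0 + u 1 * v 1 + u 2 * v 2 + u 3 * v 3 + u 4 * v 4 + u 5 * v 5 + u 6 * v 6 +
    u 7 * v 7
  have hcs : P ^ 2 ≤
      (u 0 ^ 2 + u 1 ^ 2 + u 2 ^ 2 + u 3 ^ 2 + u 4 ^ 2 + u 5 ^ 2 + u 6 ^ 2 + u 7 ^ 2) *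
      (v 0 ^ 2 + v 1 ^ 2 + v 2 ^ 2 + v 3 ^ 2 + v 4 ^ 2 + v 5 ^ 2 + v 6 ^ 2 + v 7 ^ 2) := by
    have h := Finset.sum_mul_sq_le_sq_mul_sq Finset.univ (fun i : Fin 8 => u (i.castAdd 2))
      (fun i => v (i.castAdd 2))
    simp only [Fin.sum_univ_eight] at h
    exact h
  rw [bil_self_eq] at hu hv
  have hS : P ^ 2 ≤ (u 8 * v 9 + u 9 * v 8) ^ 2 := by
    calc P ^ 2 ≤ (2 * (u 8 * u 9)) * (2 * (v 8 * v 9)) := by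
          refine hcs.trans (mul_le_mul (by linarith) (by linarith) ?_ (by positivity))
          positivity
      _ ≤ (u 8 * v 9 + u 9 * v 8) ^ 2 := by nlinarith [sq_nonneg (u 8 * v 9 - u 9 * v 8)]
  have := le_of_sq_le_sq hS (by positivity)
  simp only [bil]
  linarith

lemma bil_eU_pos_of_bil_pos {u v : Vec} (hu : InClosedFuture u) (hv : 0 ≤ bil v v)
    (huv : 0 < bil u v) : 0 < bil v eU := by
  by_contra! hneg
  have hv' : InClosedFuture (-v) := by
    refine inClosedFuture_of_bil_self_nonneg ?_ ?_
    · simpa [bil] using hv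
    · simp only [bil_eU] at hneg
      simp only [Pi.neg_apply]
      linarith
  have := hu.bil_nonneg hv'
  simp only [bil, Pi.neg_apply] at this huv
  linarith

end Cone

section Reflection

variable {r : Vec} (hr : bil r r = -2)

lemma reflG_apply (x : Vec) : reflG r hr x = x + bil x r • r := rfl

lemma bil_reflG_left (x y : Vec) : bil (reflG r hr x) y = bil x y + bil x r * bil r y := by
  rw [reflG_apply, bil_add_left, bil_smul_left]

lemma bil_reflG_reflG (x : Vec) : bil (reflG r hr x) (reflG r hr x) = bil x x := by
  simp only [reflG_apply, bil_add_left, bil_add_right, bil_smul_left, bil_smul_right, hr,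
    bil_comm r x]
  ring

lemma mem_reflG {x : Vec} (hx : mem x) (hrm : mem r) : mem (reflG r hr x) := by
  obtain ⟨n, hn⟩ := bil_int hx hrm
  rw [reflG_apply, hn]
  exact mem_add_zsmul hx hrm n

end Reflection

lemma IsNull.inClosedFuture {v : Vec} (hv : IsNull v) : InClosedFuture v :=
  inClosedFuture_of_bil_self_nonneg hv.2.1.ge ((bil_eU v).symm ▸ hv.2.2.1.le)

lemma IsNull.reflG {v : Vec} (hv : IsNull v) {r : Vec} (hr : bil r r = -2) (hrm : mem r)
    (hvr : bil v r ≠ 0) : IsNull (_root_.reflG r hr v) := by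
  obtain ⟨hmem, hnorm, hfut, hprim⟩ := hv
  have hnorm' := (bil_reflG_reflG hr v).trans hnorm
  refine ⟨mem_reflG hr hmem hrm, hnorm', ?_, fun k w hw hvw => ?_⟩
  · refine bil_eU_pos_of_bil_pos (IsNull.inClosedFuture ⟨hmem, hnorm, hfut, hprim⟩)
      hnorm'.ge ?_
    rw [bil_comm, bil_reflG_left, hnorm, bil_comm r v, zero_add]
    exact mul_self_pos.2 hvr
  · refine hprim k (_root_.reflG r hr w) (mem_reflG hr hw hrm) ?_
    calc v = _root_.reflG r hr (_root_.reflG r hr v) := (reflMap_invol r hr v).symm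
      _ = (k : ℚ) • _root_.reflG r hr w := by rw [hvw, map_smul]

section Chamber

/-- The fundamental weights: `bil (weight i) (simpleRoot j) = if i = j then 1 else 0`. -/
def weight : Fin 10 → Vec :=
  ![ρ,
    ![0, 0, 0, 0, 0, 0, 0, 0, 1, 1],
    ![-1/2, -1/2, -1/2, -1/2, -1/2, -1/2, -1/2, 1/2, 2, 2],
    ![-1, -1, -1, -1, -1, -1, 0, 0, 3, 3],
    ![-3/2, -3/2, -3/2, -3/2, -3/2, -1/2, -1/2, -1/2, 4, 4],
    ![-2, -2, -2, -2, -1, -1, -1, -1, 5, 5],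
    ![-5/2, -5/2, -5/2, -3/2, -3/2, -3/2, -3/2, -3/2, 6, 6],
    ![-2, -2, -1, -1, -1, -1, -1, -1, 4, 4],
    ![-3/2, -1/2, -1/2, -1/2, -1/2, -1/2, -1/2, -1/2, 2, 2],
    ![-1, -1, -1, -1, -1, -1, -1, -1, 3, 3]]

lemma eq_sum_bil_simpleRoot_smul_weight (v : Vec) :
    v = ∑ i, bil v (simpleRoot i) • weight i := by
  ext k
  simp only [Finset.sum_apply, Fin.sum_univ_succ, Fin.sum_univ_zero, Pi.smul_apply, smul_eq_mul]
  fin_cases k <;> simp [weight, simpleRoot, ρ, bil, r1, r2, r3, r4, r5, r6, r7, r8, r9, r10]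
  all_goals ring

lemma weight_inClosedFuture (i : Fin 10) : InClosedFuture (weight i) := by
  fin_cases i <;> norm_num [InClosedFuture, weight, ρ, bil]

lemma bil_weight_self_pos {i : Fin 10} (hi : i ≠ 0) : 0 < bil (weight i) (weight i) := by
  fin_cases i
  · exact absurd rfl hi
  all_goals norm_num [weight, bil]

lemma bil_sum_left {ι : Type*} (s : Finset ι) (f : ι → Vec) (y : Vec) :
    bil (∑ i ∈ s, f i) y = ∑ i ∈ s, bil (f i) y :=
  map_sum (AddMonoidHom.mk' (bil · y) (bil_add_left · · y)) f s

lemma bil_sum_right {ι : Type*} (s : Finset ι) (x : Vec) (f : ι → Vec) :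
    bil x (∑ i ∈ s, f i) = ∑ i ∈ s, bil x (f i) := by
  rw [bil_comm, bil_sum_left]
  simp only [bil_comm x]

lemma eq_smul_ρ_of_bil_simpleRoot_nonneg {v : Vec} (hv : bil v v = 0)
    (h : ∀ i, 0 ≤ bil v (simpleRoot i)) : v = bil v r1 • ρ := by
  set c : Fin 10 → ℚ := fun i => bil v (simpleRoot i)
  have hexp : v = ∑ i, c i • weight i := eq_sum_bil_simpleRoot_smul_weight v
  have hterm : ∀ i j, 0 ≤ c i * c j * bil (weight i) (weight j) := fun i j =>
    mul_nonneg (mul_nonneg (h i) (h j))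
      ((weight_inClosedFuture i).bil_nonneg (weight_inClosedFuture j))
  have hsum : ∑ i, ∑ j, c i * c j * bil (weight i) (weight j) = 0 := by
    rw [← hv]
    conv_rhs => rw [hexp]
    simp only [bil_sum_left, bil_sum_right, bil_smul_left, bil_smul_right, Finset.mul_sum]
    rw [Finset.sum_comm]
    exact Finset.sum_congr rfl fun i _ => Finset.sum_congr rfl fun j _ => by ring
  have hc : ∀ i, i ≠ 0 → c i = 0 := by
    intro i hi
    rw [Finset.sum_eq_zero_iff_of_nonneg (fun i _ => Finset.sum_nonneg fun j _ => hterm i j)]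
      at hsum
    have hii : c i * c i * bil (weight i) (weight i) = 0 :=
      (Finset.sum_eq_zero_iff_of_nonneg (fun j _ => hterm i j)).1
        (hsum i (Finset.mem_univ i)) i (Finset.mem_univ i)
    simpa [(bil_weight_self_pos hi).ne'] using hii
  calc v = ∑ i, c i • weight i := hexp
    _ = c 0 • weight 0 := Finset.sum_eq_single 0 (fun i _ hi => by simp [hc i hi]) (by simp)
    _ = bil v r1 • ρ := rfl

lemma IsNull.eq_ρ_of_bil_simpleRoot_nonneg {v : Vec} (hv : IsNull v)
    (h : ∀ i, 0 ≤ bil v (simpleRoot i)) : v = ρ := by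
  obtain ⟨hmem, hnorm, hfut, hprim⟩ := hv
  have hvρ := eq_smul_ρ_of_bil_simpleRoot_nonneg hnorm h
  obtain ⟨c, hc⟩ := bil_int hmem (mem_simpleRoot 0)
  change bil v r1 = c at hc
  rw [hc] at hvρ
  have hcpos : (0 : ℚ) < c := by
    rw [hvρ, bil_smul_left] at hfut
    simpa [bil, ρ, eU] using hfut
  rcases hprim c ρ mem_ρ hvρ with rfl | rfl
  · simpa using hvρ
  · norm_num at hcpos

end Chamber

section Descent

/-- The Weyl vector `∑ i, weight i`. -/
def weylVector : Vec := ![-12, -11, -10, -9, -8, -7, -6, -5, 31, 30]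

lemma bil_simpleRoot_weylVector (i : Fin 10) : bil (simpleRoot i) weylVector = 1 := by
  fin_cases i <;>
    norm_num [simpleRoot, weylVector, bil, r1, r2, r3, r4, r5, r6, r7, r8, r9, r10]

lemma weylVector_inClosedFuture : InClosedFuture weylVector := by
  norm_num [InClosedFuture, weylVector, bil]

lemma IsNull.exists_mem_W237_bil_weylVector_le {v : Vec} (hv : IsNull v) (hne : v ≠ ρ) :
    ∃ g ∈ W237, IsNull (g v) ∧ bil (g v) weylVector ≤ bil v weylVector - 1 := by
  obtain ⟨i, hi⟩ : ∃ i, bil v (simpleRoot i) < 0 := by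
    by_contra! hchamber
    exact hne (hv.eq_ρ_of_bil_simpleRoot_nonneg hchamber)
  refine ⟨_, reflG_simpleRoot_mem_W237 i, hv.reflG _ (mem_simpleRoot i) hi.ne, ?_⟩
  obtain ⟨n, hn⟩ := bil_int hv.1 (mem_simpleRoot i)
  rw [hn, Int.cast_lt_zero] at hi
  rw [bil_reflG_left, bil_simpleRoot_weylVector, hn, mul_one]
  have : (n : ℚ) ≤ -1 := by exact_mod_cast Int.le_sub_one_of_lt hi
  linarith

lemma IsNull.exists_mem_W237_apply_eq_ρ {v : Vec} (hv : IsNull v) : ∃ g ∈ W237, g v = ρ := by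
  simpa only [LinearEquiv.smul_def] using exists_mem_smul_eq_of_descent W237 {v | IsNull v} ρ
    (bil · weylVector) (fun v hv => hv.inClosedFuture.bil_nonneg weylVector_inClosedFuture)
    (fun v hv hne => by simpa only [LinearEquiv.smul_def, Set.mem_ofPred_eq] using
      IsNull.exists_mem_W237_bil_weylVector_le hv hne) v hv

end Descent

/-- The group `W₂₃₇` generated by the reflections in the ten roots
`r₁,…,r₁₀` acts transitively on the set of null vectors of `Λ`
(future-directed primitive lattice vectors of norm `0`). -/
theorem W237_transitive_on_null_vectors :
    ∀ u v : Vec, IsNull u → IsNull v →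
      ∃ w ∈ Subgroup.closure
        {reflG r1 r1_norm, reflG r2 r2_norm, reflG r3 r3_norm, reflG r4 r4_norm,
         reflG r5 r5_norm, reflG r6 r6_norm, reflG r7 r7_norm, reflG r8 r8_norm,
         reflG r9 r9_norm, reflG r10 r10_norm},
        w u = v := by
  intro u v hu hv
  obtain ⟨g, hg, hgu⟩ := hu.exists_mem_W237_apply_eq_ρ
  obtain ⟨h, hh, hhv⟩ := hv.exists_mem_W237_apply_eq_ρ
  refine ⟨h⁻¹ * g, W237.mul_mem (W237.inv_mem hh) hg, ?_⟩
  change h.symm (g u) = v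
  rw [hgu, ← hhv, h.symm_apply_apply]
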